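/- Let (R,m) be a Noetherian local ring. Then at least one of the following holds: (1) R is Artinian; (2) R is regular of dimension 1; (3) depth_m R ≥ 2; (4) there exists a ring homomorphism φ: R → S that is not an isomorphism, whose kernel and cokernel are killed by a power of m, and such that m is not an associated prime of S (i.e., (R,m) is a non-normal pair). -/

import Mathlib

/-!
If some `x ≠ 0` is killed by `m`, then `R → R ⧸ H⁰_m(R)` is a non-normal pair: by noetherianity
the torsion `H⁰_m(R)` is `ann(m^N)` for large `N`, so `R ⧸ H⁰_m(R)` has no `m`-torsion left.
Otherwise prime avoidance over the finitely many associated primes of `R` gives a nonzerodivisor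
`r ∈ m`. If no element of `m` is regular on `R ⧸ (r)`, the same argument gives `x ∉ (r)` with
`m x ⊆ (r)`. Either `m x ⊆ r m`, and then `θ = x / r` satisfies `θ m ⊆ m`, so that
`R ⊊ R[θ] ⊆ R[1/r]` is a non-normal pair; or `a x = u r` for some `a ∈ m` and unit `u`, and then
`t = u⁻¹ a` satisfies `t x = r`, which forces `m = (t)` with `t` a nonzerodivisor.
-/

open IsLocalRing nonZeroDivisors

/-- The last alternative of `stmt0`, for an arbitrary ideal `I` in place of `m`. -/
def IsNonNormalPair (R : Type) [CommRing R] (I : Ideal R) : Prop :=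
  ∃ (S : Type) (_ : CommRing S) (φ : R →+* S), ¬ Function.Bijective φ ∧
    (∃ n : ℕ,
      (∀ x ∈ RingHom.ker φ, ∀ y ∈ I ^ n, y * x = 0) ∧
      (∀ s : S, ∀ y ∈ I ^ n, φ y * s ∈ φ.range)) ∧
    (letI := φ.toAlgebra; I ∉ associatedPrimes R S)

section Module

variable {R M : Type*} [CommRing R] [IsNoetherianRing R] [AddCommGroup M] [Module R M]

theorem notMem_associatedPrimes_of_forall_smul_eq_zero {I : Ideal R}
    (h : ∀ x : M, (∀ a ∈ I, a • x = 0) → x = 0) : I ∉ associatedPrimes R M := by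
  intro hI
  obtain ⟨hprime, x, rfl⟩ := isAssociatedPrime_iff.mp hI
  have hx : x = 0 := h x fun a ha => Submodule.mem_colon_singleton.mp ha
  exact hprime.ne_top (by simp [hx])

theorem Ideal.exists_ne_zero_forall_smul_eq_zero_of_not_isSMulRegular [Module.Finite R M]
    {m : Ideal R} (h : ∀ r ∈ m, ¬ IsSMulRegular M r) : ∃ x : M, x ≠ 0 ∧ ∀ a ∈ m, a • x = 0 := by
  obtain ⟨p, hp, hmp⟩ : ∃ p ∈ associatedPrimes R M, m ≤ p :=
    (Ideal.subset_union_prime_finite (associatedPrimes.finite R M) (f := id) ⊥ ⊥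
      fun p hp _ _ => hp.isPrime).mp <|
        (biUnion_associatedPrimes_eq_compl_regular R M).symm ▸ h
  obtain ⟨hprime, x, rfl⟩ := isAssociatedPrime_iff.mp hp
  refine ⟨x, fun hx => hprime.ne_top (by simp [hx]), fun a ha => ?_⟩
  exact Submodule.mem_colon_singleton.mp (hmp ha)

end Module

section General

variable {R : Type*} [CommRing R]

theorem Ideal.exists_annihilator_pow_stable [IsNoetherianRing R] (I : Ideal R) :
    ∃ N, ∀ n ≥ N, (I ^ n).annihilator = (I ^ N).annihilator :=
  (monotone_stabilizes_iff_noetherian.mpr inferInstance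
    ⟨fun n => (I ^ n).annihilator, fun _ _ h => Submodule.annihilator_mono
      (Ideal.pow_le_pow_right h)⟩).imp fun _ h n hn => (h n hn).symm

theorem Ideal.mem_annihilator_pow_succ {I : Ideal R} {n : ℕ} {b : R}
    (h : ∀ a ∈ I, a * b ∈ (I ^ n).annihilator) : b ∈ (I ^ (n + 1)).annihilator := by
  rw [Submodule.mem_annihilator, pow_succ']
  intro y hy
  refine Submodule.mul_induction_on hy (fun u hu v hv => ?_) fun y z hy hz => ?_
  · rw [smul_eq_mul, ← mul_assoc, mul_comm b]
    exact Submodule.mem_annihilator.mp (h u hu) v hv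
  · rw [smul_add, hy, hz, add_zero]

theorem exists_mul_eq_algebraMap_of_mem_adjoin {Q : Type*} [CommRing Q] [Algebra R Q]
    {I : Ideal R} {θ : Q} (hθ : ∀ a ∈ I, ∃ w ∈ I, algebraMap R Q a * θ = algebraMap R Q w)
    {s : Q} (hs : s ∈ Algebra.adjoin R {θ}) :
    ∀ a ∈ I, ∃ w ∈ I, algebraMap R Q a * s = algebraMap R Q w := by
  induction hs using Algebra.adjoin_induction with
  | mem t ht => exact (Set.mem_singleton_iff.mp ht) ▸ hθ
  | algebraMap c => exact fun a ha => ⟨a * c, I.mul_mem_right c ha, (map_mul _ _ _).symm⟩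
  | add s t _ _ hs ht =>
    intro a ha
    obtain ⟨w₁, hw₁, h₁⟩ := hs a ha
    obtain ⟨w₂, hw₂, h₂⟩ := ht a ha
    exact ⟨w₁ + w₂, add_mem hw₁ hw₂, by rw [mul_add, h₁, h₂, map_add]⟩
  | mul s t _ _ hs ht =>
    intro a ha
    obtain ⟨w₁, hw₁, h₁⟩ := hs a ha
    obtain ⟨w₂, hw₂, h₂⟩ := ht w₁ hw₁
    exact ⟨w₂, hw₂, by rw [← mul_assoc, h₁, h₂]⟩

theorem exists_mem_nonZeroDivisors_eq_span_singleton {I : Ideal R} {r x a u : R} (hr : r ∈ R⁰)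
    (hxI : ∀ b ∈ I, b * x ∈ Ideal.span {r}) (ha : a ∈ I) (hu : IsUnit u) (hax : a * x = u * r) :
    ∃ t ∈ R⁰, I = Ideal.span {t} := by
  set t := ↑hu.unit⁻¹ * a
  have htx : t * x = r := by rw [mul_assoc, hax, ← mul_assoc, hu.val_inv_mul, one_mul]
  have hx : x ∈ R⁰ := (mul_mem_nonZeroDivisors.mp (htx ▸ hr)).2
  refine ⟨t, (mul_mem_nonZeroDivisors.mp (htx ▸ hr)).1, le_antisymm (fun z hz => ?_) ?_⟩
  · obtain ⟨d, hd⟩ := Ideal.mem_span_singleton'.mp (hxI z hz)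
    refine Ideal.mem_span_singleton'.mpr ⟨d, (mul_cancel_right_mem_nonZeroDivisors hx).mp ?_⟩
    rw [mul_assoc, htx, hd]
  · exact (Ideal.span_singleton_le_iff_mem I).mpr (I.mul_mem_left _ ha)

end General

section NonNormalPair

variable {R : Type} [CommRing R]

theorem isNonNormalPair_of_mul_eq_zero [IsNoetherianRing R] {I : Ideal R} {x : R} (hx : x ≠ 0)
    (hxI : ∀ a ∈ I, a * x = 0) : IsNonNormalPair R I := by
  obtain ⟨N, hN⟩ := I.exists_annihilator_pow_stable
  set H := (I ^ N).annihilator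
  have hxH : x ∈ H := hN (N + 1) N.le_succ ▸ Ideal.mem_annihilator_pow_succ fun a ha => by
    rw [hxI a ha]; exact zero_mem _
  refine ⟨R ⧸ H, inferInstance, Ideal.Quotient.mk H, fun hbij => hx ?_, ⟨N, ?_, ?_⟩, ?_⟩
  · exact hbij.injective (by rwa [map_zero, Ideal.Quotient.eq_zero_iff_mem])
  · intro z hz y hy
    rw [Ideal.mk_ker] at hz
    rw [mul_comm]
    exact Submodule.mem_annihilator.mp hz y hy
  · intro s y _
    obtain ⟨s, rfl⟩ := Ideal.Quotient.mk_surjective s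
    exact ⟨y * s, map_mul _ _ _⟩
  · let := (Ideal.Quotient.mk H).toAlgebra
    refine notMem_associatedPrimes_of_forall_smul_eq_zero fun z hz => ?_
    obtain ⟨b, rfl⟩ := Ideal.Quotient.mk_surjective z
    rw [Ideal.Quotient.eq_zero_iff_mem, ← hN (N + 1) N.le_succ]
    exact Ideal.mem_annihilator_pow_succ fun a ha =>
      Ideal.Quotient.eq_zero_iff_mem.mp (by rw [map_mul]; exact hz a ha)

theorem isNonNormalPair_of_injective [IsNoetherianRing R] {S : Type} [CommRing S] {I : Ideal R}
    (φ : R →+* S) (hinj : Function.Injective φ) (hsurj : ¬ Function.Surjective φ)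
    (hcok : ∀ s : S, ∀ y ∈ I, φ y * s ∈ φ.range) {r : R} (hrI : r ∈ I) (hr : φ r ∈ S⁰) :
    IsNonNormalPair R I := by
  refine ⟨S, inferInstance, φ, fun hbij => hsurj hbij.surjective, ⟨1, ?_, ?_⟩, ?_⟩
  · intro x hx y _
    rw [(RingHom.injective_iff_ker_eq_bot φ).mp hinj] at hx
    rw [(Submodule.mem_bot R).mp hx, mul_zero]
  · simpa only [pow_one] using hcok
  · let := φ.toAlgebra
    exact notMem_associatedPrimes_of_forall_smul_eq_zero fun s hs =>
      mem_nonZeroDivisors_iff_left.mp hr s (hs r hrI)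

theorem isNonNormalPair_of_forall_mul_eq_mul [IsNoetherianRing R] {I : Ideal R} {r x : R}
    (hrI : r ∈ I) (hr : r ∈ R⁰) (hx : x ∉ Ideal.span {r})
    (hxI : ∀ a ∈ I, ∃ w ∈ I, a * x = r * w) : IsNonNormalPair R I := by
  let Q := Localization.Away r
  let θ : Q := IsLocalization.mk' Q x ⟨r, Submonoid.mem_powers r⟩
  have hθr : θ * algebraMap R Q r = algebraMap R Q x := IsLocalization.mk'_spec Q x _
  have hinj : Function.Injective (algebraMap R Q) :=
    IsLocalization.injective Q (Submonoid.powers_le.mpr hr)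
  have hθ : ∀ a ∈ I, ∃ w ∈ I, algebraMap R Q a * θ = algebraMap R Q w := by
    intro a ha
    obtain ⟨w, hw, haw⟩ := hxI a ha
    refine ⟨w, hw, ?_⟩
    rw [IsLocalization.mul_mk'_eq_mk'_of_mul, haw]
    exact IsLocalization.mk'_mul_cancel_left (S := Q) w ⟨r, Submonoid.mem_powers r⟩
  let S := Algebra.adjoin R {θ}
  refine isNonNormalPair_of_injective (algebraMap R S) ?_ ?_ ?_ hrI ?_
  · exact fun a b hab => hinj (congrArg Subtype.val hab)
  · intro hsurj
    obtain ⟨c, hc⟩ := hsurj ⟨θ, Algebra.subset_adjoin rfl⟩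
    refine hx (Ideal.mem_span_singleton'.mpr ⟨c, hinj ?_⟩)
    rw [map_mul, ← hθr]
    exact congrArg (· * algebraMap R Q r) (congrArg Subtype.val hc)
  · intro s y hy
    obtain ⟨w, _, hw⟩ := exists_mul_eq_algebraMap_of_mem_adjoin hθ s.2 y hy
    exact ⟨w, Subtype.ext hw.symm⟩
  · have hunit : IsUnit (algebraMap R Q r) :=
      IsLocalization.map_units Q ⟨r, Submonoid.mem_powers r⟩
    refine mem_nonZeroDivisors_iff_left.mpr fun s hs => Subtype.ext ?_
    exact hunit.mul_right_eq_zero.mp (congrArg Subtype.val hs)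

end NonNormalPair

section LocalRing

variable {R : Type} [CommRing R] [IsLocalRing R]

theorem exists_eq_span_singleton_or_isNonNormalPair [IsNoetherianRing R] {r x : R}
    (hrm : r ∈ maximalIdeal R) (hr : r ∈ R⁰) (hx : x ∉ Ideal.span {r})
    (hxm : ∀ a ∈ maximalIdeal R, a * x ∈ Ideal.span {r}) :
    (∃ t ∈ R⁰, maximalIdeal R = Ideal.span {t}) ∨ IsNonNormalPair R (maximalIdeal R) := by
  by_cases hw : ∀ a ∈ maximalIdeal R, ∃ w ∈ maximalIdeal R, a * x = r * w
  · exact .inr (isNonNormalPair_of_forall_mul_eq_mul hrm hr hx hw)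
  push Not at hw
  obtain ⟨a, ha, haw⟩ := hw
  obtain ⟨u, hu⟩ := Ideal.mem_span_singleton'.mp (hxm a ha)
  have hunit : IsUnit u := by
    by_contra hu'
    exact haw u hu' (by rw [← hu, mul_comm])
  exact .inl (exists_mem_nonZeroDivisors_eq_span_singleton hr hxm ha hunit hu.symm)

end LocalRing

theorem stmt0 (R : Type) [CommRing R] [IsLocalRing R] [IsNoetherianRing R] :
    IsArtinianRing R ∨
    -- regular of dimension 1: maximal ideal nonzero, principal, generated by a nonzerodivisor
    (∃ t : R, t ∈ nonZeroDivisors R ∧ IsLocalRing.maximalIdeal R = Ideal.span {t} ∧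
      IsLocalRing.maximalIdeal R ≠ ⊥) ∨
    -- depth_m R ≥ 2: a regular sequence of length two inside m
    (∃ r ∈ IsLocalRing.maximalIdeal R, r ∈ nonZeroDivisors R ∧
      ∃ s ∈ IsLocalRing.maximalIdeal R,
        ∀ x : R, s * x ∈ Ideal.span {r} → x ∈ Ideal.span {r}) ∨
    -- (R,m) is a non-normal pair
    (∃ (S : Type) (_ : CommRing S) (φ : R →+* S), ¬ Function.Bijective φ ∧
      (∃ n : ℕ,
        (∀ x ∈ RingHom.ker φ, ∀ y ∈ (IsLocalRing.maximalIdeal R) ^ n, y * x = 0) ∧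
        (∀ s : S, ∀ y ∈ (IsLocalRing.maximalIdeal R) ^ n, φ y * s ∈ φ.range)) ∧
      (letI := φ.toAlgebra; IsLocalRing.maximalIdeal R ∉ associatedPrimes R S)) := by
  refine .inr ?_
  by_cases hsocle : ∃ x : R, x ≠ 0 ∧ ∀ a ∈ maximalIdeal R, a * x = 0
  · obtain ⟨x, hx, hxm⟩ := hsocle
    exact .inr (.inr (isNonNormalPair_of_mul_eq_zero hx hxm))
  obtain ⟨r, hrm, hr⟩ : ∃ r ∈ maximalIdeal R, IsSMulRegular R r := by
    by_contra! h
    exact hsocle (Ideal.exists_ne_zero_forall_smul_eq_zero_of_not_isSMulRegular h)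
  replace hr : r ∈ R⁰ := mem_nonZeroDivisors_iff_left.mpr
    (isSMulRegular_iff_right_eq_zero_of_smul.mp hr)
  by_cases hdepth : ∃ s ∈ maximalIdeal R, IsSMulRegular (R ⧸ Ideal.span {r}) s
  · obtain ⟨s, hsm, hs⟩ := hdepth
    exact .inr (.inl ⟨r, hrm, hr, s, hsm, (isSMulRegular_quotient_iff_mem_of_smul_mem _ s).mp hs⟩)
  obtain ⟨y, hy, hym⟩ := Ideal.exists_ne_zero_forall_smul_eq_zero_of_not_isSMulRegular
    fun s hs hreg => hdepth ⟨s, hs, hreg⟩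
  obtain ⟨x, rfl⟩ := Ideal.Quotient.mk_surjective y
  rcases exists_eq_span_singleton_or_isNonNormalPair hrm hr
    (mt Ideal.Quotient.eq_zero_iff_mem.mpr hy)
    (fun a ha => Ideal.Quotient.eq_zero_iff_mem.mp (hym a ha)) with ⟨t, ht, hmt⟩ | h
  · exact .inl ⟨t, ht, hmt, fun hbot => nonZeroDivisors.ne_zero hr (by simpa [hbot] using hrm)⟩
  · exact .inr (.inr h)
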